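/- Let w_1, …, w_N : ℝ^n → ℝ^n be contractions with respect to the metric d, with contraction factors λ_1, …, λ_N ∈ [0, 1), set λ_max = max_i λ_i, and let w̃_1, …, w̃_N : D^n(δ) → D^n(δ) be their δ-roundoffs. Fix any starting point x̃_0 ∈ D^n(δ) and any sequence of indices i_1, i_2, … ∈ {1, …, N}, and define x_k = w_{i_k}(x_{k−1}) with x_0 = x̃_0, and x̃_k = w̃_{i_k}(x̃_{k−1}). Then for every k ∈ ℕ, d(x_k, x̃_k) ≤ θ(1 − λ_max)^{−1}. -/

import Mathlib

open Set

noncomputable section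

/-- The δ-discretization of ℝⁿ: the set of centers of the cubes of the δ-grid. -/
def Dgrid (n : ℕ) (δ : ℝ) : Set (Fin n → ℝ) :=
  {x | ∃ m : Fin n → ℤ, x = fun j => δ * (m j : ℝ)}

/-- The δ-roundoff of a point `x ∈ ℝⁿ`. -/
def roundPt (n : ℕ) (δ : ℝ) (x : Fin n → ℝ) : Fin n → ℝ :=
  fun j => δ * (⌊x j / δ + 1 / 2⌋ : ℤ)

/-- The δ-roundoff of a mapping `w : ℝⁿ → ℝⁿ`. -/
def roundMap (n : ℕ) (δ : ℝ) (w : (Fin n → ℝ) → (Fin n → ℝ)) :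
    (Fin n → ℝ) → (Fin n → ℝ) :=
  fun x => roundPt n δ (w x)

/-- The diameter of a δ-cube with respect to the norm `nrm`; `θ` is half this value. -/
def cubeDiam (n : ℕ) (δ : ℝ) (nrm : (Fin n → ℝ) → ℝ) : ℝ :=
  sSup {r | ∃ x y : Fin n → ℝ,
    (∀ j, -(δ / 2) ≤ x j ∧ x j < δ / 2) ∧
    (∀ j, -(δ / 2) ≤ y j ∧ y j < δ / 2) ∧ r = nrm (x - y)}

/-!
Round-off moves a point by at most `θ`: its error vector `e` lies in the centred half-open cube,
and for `c < 1` so do `± c • e`, at distance `2c‖e‖` from each other. Hence the error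
`εₖ = d(xₖ, x̃ₖ)` obeys `εₖ₊₁ ≤ λ_max εₖ + θ`, and `[0, θ(1 - λ_max)⁻¹]` is invariant under
`t ↦ λ_max t + θ`.
-/

open Filter Topology

theorem Seminorm.apply_le_sum_abs_mul_single {ι : Type*} [Fintype ι] [DecidableEq ι]
    (p : Seminorm ℝ (ι → ℝ)) (z : ι → ℝ) :
    p z ≤ ∑ j, |z j| * p (Pi.single j 1) := by
  conv_lhs => rw [pi_eq_sum_univ' z]
  refine (Finset.le_sum_of_subadditive p (map_zero p).le (map_add_le_add p) _ _).trans_eq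
    (Finset.sum_congr rfl fun j _ => ?_)
  rw [map_smul_eq_mul, Real.norm_eq_abs]

section Cube

variable {n : ℕ} {δ : ℝ} (p : Seminorm ℝ (Fin n → ℝ))

theorem le_cubeDiam {x y : Fin n → ℝ} (hx : ∀ j, x j ∈ Ico (-(δ / 2)) (δ / 2))
    (hy : ∀ j, y j ∈ Ico (-(δ / 2)) (δ / 2)) :
    p (x - y) ≤ cubeDiam n δ p := by
  refine le_csSup ⟨∑ j, δ * p (Pi.single j 1), ?_⟩ ⟨x, y, hx, hy, rfl⟩
  rintro _ ⟨a, b, ha, hb, rfl⟩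
  refine (p.apply_le_sum_abs_mul_single _).trans
    (Finset.sum_le_sum fun j _ => mul_le_mul_of_nonneg_right ?_ (apply_nonneg p _))
  rw [Pi.sub_apply, abs_le]
  constructor <;> linarith [ha j, hb j]

theorem two_mul_le_cubeDiam {e : Fin n → ℝ} (he : ∀ j, e j ∈ Ico (-(δ / 2)) (δ / 2)) :
    2 * p e ≤ cubeDiam n δ p := by
  have hscaled : ∀ c ∈ Ioo (0 : ℝ) 1, 2 * c * p e ≤ cubeDiam n δ p := by
    rintro c ⟨hc0, hc1⟩
    have hce : ∀ j,
        (c • e) j ∈ Ico (-(δ / 2)) (δ / 2) ∧ (-(c • e)) j ∈ Ico (-(δ / 2)) (δ / 2) := by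
      intro j
      obtain ⟨h₁, h₂⟩ := he j
      simp only [Pi.neg_apply, Pi.smul_apply, smul_eq_mul, mem_Ico]
      refine ⟨⟨?_, ?_⟩, ?_, ?_⟩ <;> nlinarith
    have := le_cubeDiam p (fun j => (hce j).1) (fun j => (hce j).2)
    rwa [sub_neg_eq_add, ← two_smul ℝ, smul_smul, map_smul_eq_mul, Real.norm_eq_abs,
      abs_of_pos (by positivity)] at this
  have hlim : Tendsto (fun c : ℝ => 2 * c * p e) (𝓝[<] 1) (𝓝 (2 * 1 * p e)) :=
    ((continuous_const.mul continuous_id).mul continuous_const).continuousWithinAt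
  refine le_of_tendsto (by simpa using hlim) ?_
  filter_upwards [Ioo_mem_nhdsLT (zero_lt_one' ℝ)] using hscaled

end Cube

theorem sub_roundPt_mem_Ico {n : ℕ} {δ : ℝ} (hδ : 0 < δ) (y : Fin n → ℝ) (j : Fin n) :
    (y - roundPt n δ y) j ∈ Ico (-(δ / 2)) (δ / 2) := by
  have h₁ := Int.floor_le (y j / δ + 1 / 2)
  have h₂ := Int.lt_floor_add_one (y j / δ + 1 / 2)
  have hy : y j = δ * (y j / δ) := by field_simp
  simp only [Pi.sub_apply, roundPt, mem_Ico]
  constructor <;> nlinarith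

theorem Seminorm.apply_sub_roundPt_le {n : ℕ} {δ : ℝ} (hδ : 0 < δ)
    (p : Seminorm ℝ (Fin n → ℝ)) (y : Fin n → ℝ) :
    p (y - roundPt n δ y) ≤ cubeDiam n δ p / 2 := by
  linarith [two_mul_le_cubeDiam p (sub_roundPt_mem_Ico hδ y)]

theorem Seminorm.orbit_sub_le_of_contracting {E : Type*} [AddCommGroup E] [Module ℝ E]
    (p : Seminorm ℝ E) {l θ : ℝ} (hl₀ : 0 ≤ l) (hl₁ : l < 1) {f g : ℕ → E → E}
    (hf : ∀ k x y, p (f k x - f k y) ≤ l * p (x - y)) (hg : ∀ k y, p (f k y - g k y) ≤ θ)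
    {x x' : ℕ → E} (h₀ : x 0 = x' 0) (hx : ∀ k, x (k + 1) = f k (x k))
    (hx' : ∀ k, x' (k + 1) = g k (x' k)) (k : ℕ) :
    p (x k - x' k) ≤ θ * (1 - l)⁻¹ := by
  have hθ : 0 ≤ θ := (apply_nonneg p _).trans (hg 0 0)
  have hl : 0 < 1 - l := by linarith
  induction k with
  | zero => rw [h₀, sub_self, map_zero]; positivity
  | succ k ih =>
    calc p (x (k + 1) - x' (k + 1))
        ≤ p (f k (x k) - f k (x' k)) + p (f k (x' k) - g k (x' k)) := by
          rw [hx, hx', ← sub_add_sub_cancel _ (f k (x' k))]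
          exact map_add_le_add p _ _
      _ ≤ l * (θ * (1 - l)⁻¹) + θ := by
          gcongr
          exacts [(hf k _ _).trans (by gcongr), hg k _]
      _ = θ * (1 - l)⁻¹ := by field_simp; ring

theorem stmt_17_general (n : ℕ) (δ : ℝ) (hδ : 0 < δ)
    (nrm : (Fin n → ℝ) → ℝ)
    (hnrm_smul : ∀ (a : ℝ) (x : Fin n → ℝ), nrm (a • x) = |a| * nrm x)
    (hnrm_add : ∀ x y : Fin n → ℝ, nrm (x + y) ≤ nrm x + nrm y)
    (N : ℕ)
    (w : Fin N → (Fin n → ℝ) → (Fin n → ℝ))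
    (lam : Fin N → ℝ) (hlam : ∀ i, lam i ∈ Set.Ico (0 : ℝ) 1)
    (hcontr : ∀ i, ∀ x y : Fin n → ℝ, nrm (w i x - w i y) ≤ lam i * nrm (x - y))
    (lmax : ℝ) (hlmax_ub : ∀ i, lam i ≤ lmax) (hlmax_mem : ∃ i, lam i = lmax)
    (θ : ℝ) (hθ : θ = cubeDiam n δ nrm / 2)
    (x₀ : Fin n → ℝ)
    (idx : ℕ → Fin N)
    (x xt : ℕ → Fin n → ℝ)
    (hx0 : x 0 = x₀) (hxt0 : xt 0 = x₀)
    (hxs : ∀ k : ℕ, x (k + 1) = w (idx k) (x k))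
    (hxts : ∀ k : ℕ, xt (k + 1) = roundMap n δ (w (idx k)) (xt k)) :
    ∀ k : ℕ, nrm (x k - xt k) ≤ θ * (1 - lmax)⁻¹ := by
  let p : Seminorm ℝ (Fin n → ℝ) :=
    Seminorm.of nrm hnrm_add fun a x => by rw [hnrm_smul, Real.norm_eq_abs]
  obtain ⟨i₀, rfl⟩ := hlmax_mem
  subst hθ
  exact p.orbit_sub_le_of_contracting (hlam i₀).1 (hlam i₀).2
    (fun k x y => (hcontr (idx k) x y).trans
      (mul_le_mul_of_nonneg_right (hlmax_ub _) (apply_nonneg p _)))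
    (fun k y => p.apply_sub_roundPt_le hδ (w (idx k) y)) (hx0.trans hxt0.symm) hxs hxts

/-- the orbit `x_k = w_{i_k}(x_{k-1})` of the contractions and the
orbit `x̃_k = w̃_{i_k}(x̃_{k-1})` of their δ-roundoffs, driven by the same index
sequence and started at the same grid point, shadow each other:
`d(x_k, x̃_k) ≤ θ(1-λ_max)⁻¹` for every `k`. -/
theorem stmt_17 (n : ℕ) (hn : 1 ≤ n) (δ : ℝ) (hδ : 0 < δ)
    (nrm : (Fin n → ℝ) → ℝ)
    (hnrm_eq : ∀ x, nrm x = 0 ↔ x = 0)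
    (hnrm_smul : ∀ (a : ℝ) (x : Fin n → ℝ), nrm (a • x) = |a| * nrm x)
    (hnrm_add : ∀ x y : Fin n → ℝ, nrm (x + y) ≤ nrm x + nrm y)
    (N : ℕ) (hN : 0 < N)
    (w : Fin N → (Fin n → ℝ) → (Fin n → ℝ))
    (lam : Fin N → ℝ) (hlam : ∀ i, lam i ∈ Set.Ico (0 : ℝ) 1)
    (hcontr : ∀ i, ∀ x y : Fin n → ℝ, nrm (w i x - w i y) ≤ lam i * nrm (x - y))
    (lmax : ℝ) (hlmax_ub : ∀ i, lam i ≤ lmax) (hlmax_mem : ∃ i, lam i = lmax)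
    (θ : ℝ) (hθ : θ = cubeDiam n δ nrm / 2)
    (x₀ : Fin n → ℝ) (hx₀ : x₀ ∈ Dgrid n δ)
    (idx : ℕ → Fin N)
    (x xt : ℕ → Fin n → ℝ)
    (hx0 : x 0 = x₀) (hxt0 : xt 0 = x₀)
    (hxs : ∀ k : ℕ, x (k + 1) = w (idx k) (x k))
    (hxts : ∀ k : ℕ, xt (k + 1) = roundMap n δ (w (idx k)) (xt k)) :
    ∀ k : ℕ, nrm (x k - xt k) ≤ θ * (1 - lmax)⁻¹ :=
  stmt_17_general n δ hδ nrm hnrm_smul hnrm_add N w lam hlam hcontr lmax hlmax_ub hlmax_mem θ hθ x₀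
    idx x xt hx0 hxt0 hxs hxts
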